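/- A particle entering the square [-1,1]² vertically downward at abscissa x₀ with 2^{-k} < |x₀| < 2^{-k+1} (k ≥ 1) and reflecting specularly off the arcs p'_k (on parabola y = 2^{k-2}x² + 1 - 2^{-k}) and then p'_{k+1} (on parabola y = 2^{k-1}x² + 1 - 2^{-k-1}) exits the upper half construction moving downward along the vertical line x = x₀/2; then by symmetry through the x-axis (arcs q_k, q_{k+1}), it exits the whole body moving downward along the original line x = x₀. Prove the first part: after the two reflections in the upper half, the velocity is (0,-1) and the abscissa is x₀/2. -/

import Mathlib

/-- Specular reflection of a velocity `v` at a point with unit normal `n`. -/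
def reflect (v n : ℝ × ℝ) : ℝ × ℝ := v - (2 * (v.1 * n.1 + v.2 * n.2)) • n

/-- The unit normal to the graph of a function with slope `s`. -/
noncomputable def unitNormal (s : ℝ) : ℝ × ℝ :=
  (-s / Real.sqrt (1 + s ^ 2), 1 / Real.sqrt (1 + s ^ 2))

/-
The two parabolas share the focus `F = (0,1)`, and the second is the image of the first under
the homothety of ratio `1/2` centred at `F`. By the focal property, the vertical ray reflected at
`A` on the first parabola heads for `F`, so it meets the second parabola at the midpoint of `AF`,
whose abscissa is `x₀/2`. A homothety preserves tangent directions, so the normal there equals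
the normal at `A`, and reflecting twice in the same line restores the velocity `(0,-1)`.
-/

lemma reflect_reflect (v : ℝ × ℝ) {n : ℝ × ℝ} (hn : n.1 ^ 2 + n.2 ^ 2 = 1) :
    reflect (reflect v n) n = v := by
  simp only [reflect, Prod.ext_iff, Prod.fst_sub, Prod.snd_sub, Prod.smul_fst, Prod.smul_snd,
    smul_eq_mul]
  constructor
  · linear_combination (4 * (v.1 * n.1 + v.2 * n.2) * n.1) * hn
  · linear_combination (4 * (v.1 * n.1 + v.2 * n.2) * n.2) * hn

lemma unitNormal_fst_sq_add_snd_sq (s : ℝ) :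
    (unitNormal s).1 ^ 2 + (unitNormal s).2 ^ 2 = 1 := by
  have hr : Real.sqrt (1 + s ^ 2) ^ 2 = 1 + s ^ 2 := Real.sq_sqrt (by positivity)
  have hr0 : Real.sqrt (1 + s ^ 2) ≠ 0 := (Real.sqrt_pos.mpr (by positivity)).ne'
  simp only [unitNormal, div_pow, hr]
  field_simp
  ring

lemma reflect_down_unitNormal (s : ℝ) :
    reflect (0, -1) (unitNormal s) = (1 + s ^ 2)⁻¹ • (-2 * s, 1 - s ^ 2) := by
  have hr : Real.sqrt (1 + s ^ 2) ^ 2 = 1 + s ^ 2 := Real.sq_sqrt (by positivity)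
  have hr0 : Real.sqrt (1 + s ^ 2) ≠ 0 := (Real.sqrt_pos.mpr (by positivity)).ne'
  simp only [reflect, unitNormal, Prod.ext_iff, Prod.fst_sub, Prod.snd_sub, Prod.smul_fst,
    Prod.smul_snd, smul_eq_mul]
  constructor
  · field_simp
    rw [hr]
    ring
  · field_simp
    rw [hr]
    ring

/-- The focal property of the parabola `y = a x² + f - 1/(4a)`, whose focus is `(0, f)`. -/
lemma parabola_add_smul_reflect_down_eq_focus {a : ℝ} (ha : a ≠ 0) (f x : ℝ) :
    (x, a * x ^ 2 + f - (4 * a)⁻¹) +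
        ((1 + (2 * a * x) ^ 2) / (4 * a)) • reflect (0, -1) (unitNormal (2 * a * x)) =
      (0, f) := by
  rw [reflect_down_unitNormal]
  simp only [Prod.ext_iff, Prod.fst_add, Prod.snd_add, Prod.smul_fst, Prod.smul_snd, smul_eq_mul]
  constructor
  · field_simp
    ring
  · field_simp
    ring

lemma parabola_add_half_smul_reflect_down {a : ℝ} (ha : a ≠ 0) (f x : ℝ) :
    (x, a * x ^ 2 + f - (4 * a)⁻¹) +
        ((1 + (2 * a * x) ^ 2) / (4 * a) / 2) • reflect (0, -1) (unitNormal (2 * a * x)) =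
      (x / 2, 2 * a * (x / 2) ^ 2 + f - (4 * (2 * a))⁻¹) := by
  set P : ℝ × ℝ := (x, a * x ^ 2 + f - (4 * a)⁻¹)
  set t := (1 + (2 * a * x) ^ 2) / (4 * a)
  set v := reflect (0, -1) (unitNormal (2 * a * x))
  have hF : P + t • v = (0, f) := parabola_add_smul_reflect_down_eq_focus ha f x
  have hmid : P + (t / 2) • v = (2 : ℝ)⁻¹ • (P + (P + t • v)) := by
    module
  rw [hmid, hF]
  simp only [P, Prod.ext_iff, Prod.fst_add, Prod.snd_add, Prod.smul_fst, Prod.smul_snd,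
    smul_eq_mul]
  constructor
  · ring
  · field_simp
    ring

theorem two_reflections_upper_half_general (k : ℕ) (x₀ : ℝ) :
    let A : ℝ × ℝ := (x₀, (2 : ℝ) ^ ((k : ℤ) - 2) * x₀ ^ 2 + 1 - (2 : ℝ) ^ (-(k : ℤ)))
    let v₁ : ℝ × ℝ := reflect (0, -1) (unitNormal ((2 : ℝ) ^ ((k : ℤ) - 1) * x₀))
    ∃ t : ℝ, 0 < t ∧
      (A + t • v₁).2 = (2 : ℝ) ^ ((k : ℤ) - 1) * (A + t • v₁).1 ^ 2 + 1
        - (2 : ℝ) ^ (-(k : ℤ) - 1) ∧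
      (A + t • v₁).1 = x₀ / 2 ∧
      reflect v₁ (unitNormal ((2 : ℝ) ^ (k : ℤ) * (A + t • v₁).1)) = ((0 : ℝ), (-1 : ℝ)) := by
  intro A v₁
  -- The parabolas are `y = a x² + 1 - 1/(4a)` and `y = 2a x² + 1 - 1/(8a)`.
  set a : ℝ := (2 : ℝ) ^ ((k : ℤ) - 2)
  have ha : 0 < a := zpow_pos two_pos _
  have h2a : (2 : ℝ) ^ ((k : ℤ) - 1) = 2 * a := by
    rw [show (k : ℤ) - 1 = 1 + ((k : ℤ) - 2) by ring, zpow_one_add₀ two_ne_zero]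
  have h4a : (2 : ℝ) ^ (k : ℤ) = 4 * a := by
    rw [show (k : ℤ) = 2 + ((k : ℤ) - 2) by ring, zpow_add₀ two_ne_zero]
    norm_num [a]
  have h8a : (2 : ℝ) ^ ((k : ℤ) + 1) = 4 * (2 * a) := by
    rw [zpow_add_one₀ two_ne_zero, h4a]
    ring
  have hA : A = (x₀, a * x₀ ^ 2 + 1 - (4 * a)⁻¹) := by
    simp only [A, zpow_neg, h4a, a]
  have hv₁ : v₁ = reflect (0, -1) (unitNormal (2 * a * x₀)) := by
    simp only [v₁, h2a]
  refine ⟨(1 + (2 * a * x₀) ^ 2) / (4 * a) / 2, by positivity, ?_⟩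
  rw [hA, hv₁, parabola_add_half_smul_reflect_down ha.ne', h2a, h4a,
    show -(k : ℤ) - 1 = -((k : ℤ) + 1) by ring, zpow_neg, h8a]
  refine ⟨rfl, rfl, ?_⟩
  rw [show 4 * a * (x₀ / 2) = 2 * a * x₀ by ring]
  exact reflect_reflect _ (unitNormal_fst_sq_add_snd_sq _)

/-- A particle entering the square vertically downward at abscissa `x₀` with
`2^(-k) < |x₀| < 2^(-k+1)` (`k ≥ 1`) reflects specularly off the arc `p'_k` on the
parabola `y = 2^(k-2) x² + 1 - 2^(-k)` (slope `2^(k-1) x`) and then off the arc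
`p'_(k+1)` on the parabola `y = 2^(k-1) x² + 1 - 2^(-k-1)` (slope `2^k x`); after the
two reflections in the upper half, the velocity is `(0,-1)` and the abscissa is `x₀/2`. -/
theorem two_reflections_upper_half (k : ℕ) (hk : 1 ≤ k) (x₀ : ℝ)
    (h1 : (2 : ℝ) ^ (-(k : ℤ)) < |x₀|) (h2 : |x₀| < (2 : ℝ) ^ (-(k : ℤ) + 1)) :
    let A : ℝ × ℝ := (x₀, (2 : ℝ) ^ ((k : ℤ) - 2) * x₀ ^ 2 + 1 - (2 : ℝ) ^ (-(k : ℤ)))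
    let v₁ : ℝ × ℝ := reflect (0, -1) (unitNormal ((2 : ℝ) ^ ((k : ℤ) - 1) * x₀))
    ∃ t : ℝ, 0 < t ∧
      (A + t • v₁).2 = (2 : ℝ) ^ ((k : ℤ) - 1) * (A + t • v₁).1 ^ 2 + 1
        - (2 : ℝ) ^ (-(k : ℤ) - 1) ∧
      (A + t • v₁).1 = x₀ / 2 ∧
      reflect v₁ (unitNormal ((2 : ℝ) ^ (k : ℤ) * (A + t • v₁).1)) = ((0 : ℝ), (-1 : ℝ)) :=
  two_reflections_upper_half_general k x₀
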